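/- Let M, N be positive integers, h > 0, τ > 0, and μ, γ, κ, ν ∈ ℝ. Suppose the periodic grid functions u^k, v^k (0 ≤ k ≤ N) satisfy the compact scheme. Then the first-level energy identity holds: (1/2)·(‖u¹‖² + ‖u⁰‖²) + (μ/2)·[(|u¹|₁² + |u⁰|₁²) + (h²/12)·(‖v¹‖² + ‖v⁰‖²) − (h⁴/144)·(|v¹|₁² + |v⁰|₁²)] + ν·τ·(|u^{1/2}|₁² + (h²/12)·‖v^{1/2}‖² − (h⁴/144)·|v^{1/2}|₁²) = ‖u⁰‖² + μ·|u⁰|₁² + (μh²/12)·‖v⁰‖² − (μh⁴/144)·|v⁰|₁², where w^{1/2} = (w⁰ + w¹)/2. (Theorem 4.1, equation (21).) -/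

import Mathlib

/-!
Pair the first step of the scheme with `u^{1/2}` in the discrete inner product. The time
difference gives `(‖u¹‖² - ‖u⁰‖²) / (2τ)`. On periodic grid functions `Δ_x` is skew-adjoint and
commutes with the self-adjoint `δ_x²`, so the trilinear terms `(ψ(w, u^{1/2}), u^{1/2})` and the
dispersive terms vanish; for the `Δ_x v^{1/2}` term one also needs the compact relation between
`u^{1/2}` and `v^{1/2}`. Summation by parts through the compact relation turns `-(v, u')` into a
symmetric bilinear form in the pairs `(u, v)`, `(u', v')`, whose diagonal is the energy
`|u|₁² + (h²/12)‖v‖² - (h⁴/144)|v|₁²`; this produces the `μ`- and `ν`-terms. Multiplying by `τ`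
gives the identity.
-/

open Finset

namespace BBMB

/-- A periodic grid function with period `M`. -/
def Periodic (M : ℕ) (u : ℤ → ℝ) : Prop := ∀ i : ℤ, u (i + (M : ℤ)) = u i

/-- Forward difference `δ_x u_{i+1/2} = (u_{i+1} - u_i)/h`. -/
noncomputable def dxp (h : ℝ) (u : ℤ → ℝ) (i : ℤ) : ℝ := (u (i + 1) - u i) / h

/-- Backward difference `δ_x u_{i-1/2} = (u_i - u_{i-1})/h`. -/
noncomputable def dxm (h : ℝ) (u : ℤ → ℝ) (i : ℤ) : ℝ := (u i - u (i - 1)) / h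

/-- Second difference `δ_x² u_i = (u_{i+1} - 2 u_i + u_{i-1})/h²`. -/
noncomputable def dxx (h : ℝ) (u : ℤ → ℝ) (i : ℤ) : ℝ :=
  (u (i + 1) - 2 * u i + u (i - 1)) / h ^ 2

/-- Centered difference `Δ_x u_i = (u_{i+1} - u_{i-1})/(2h)`. -/
noncomputable def Dx (h : ℝ) (u : ℤ → ℝ) (i : ℤ) : ℝ := (u (i + 1) - u (i - 1)) / (2 * h)

/-- Discrete inner product `(u, w) = h ∑_{i=1}^{M} u_i w_i`. -/
noncomputable def ip (M : ℕ) (h : ℝ) (u w : ℤ → ℝ) : ℝ :=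
  h * ∑ i ∈ Finset.Icc (1 : ℤ) (M : ℤ), u i * w i

/-- Discrete inner product `⟨δ_x u, δ_x w⟩ = h ∑_{i=1}^{M} (δ_x u_{i-1/2})(δ_x w_{i-1/2})`. -/
noncomputable def dip (M : ℕ) (h : ℝ) (u w : ℤ → ℝ) : ℝ :=
  h * ∑ i ∈ Finset.Icc (1 : ℤ) (M : ℤ), dxm h u i * dxm h w i

/-- Discrete `L²` norm `‖u‖ = √((u,u))`. -/
noncomputable def nrm (M : ℕ) (h : ℝ) (u : ℤ → ℝ) : ℝ := Real.sqrt (ip M h u u)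

/-- Discrete `H¹` seminorm `|u|₁ = √(⟨δ_x u, δ_x u⟩)`. -/
noncomputable def snorm (M : ℕ) (h : ℝ) (u : ℤ → ℝ) : ℝ := Real.sqrt (dip M h u u)

/-- Trilinear term `ψ(u,v)_i = (1/3) (u_i Δ_x v_i + Δ_x (u·v)_i)`. -/
noncomputable def psi (h : ℝ) (u v : ℤ → ℝ) (i : ℤ) : ℝ :=
  (1 / 3) * (u i * Dx h v i + Dx h (fun j => u j * v j) i)

/-- Average of two grid functions. -/
noncomputable def half (w0 w1 : ℤ → ℝ) : ℤ → ℝ := fun i => (w0 i + w1 i) / 2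

/-- The three-level linearized compact difference scheme (17)–(20a). -/
def SatisfiesScheme (M N : ℕ) (h τ μ γ κ ν : ℝ) (u v : ℕ → ℤ → ℝ) : Prop :=
  (∀ k ≤ N, Periodic M (u k) ∧ Periodic M (v k)) ∧
  (∀ k ≤ N, ∀ i : ℤ, v k i = dxx h (u k) i - h ^ 2 / 12 * dxx h (v k) i) ∧
  (∀ i : ℤ,
    (u 1 i - u 0 i) / τ - μ * (v 1 i - v 0 i) / τ
      + γ * (psi h (u 0) (half (u 0) (u 1)) i
             - h ^ 2 / 2 * psi h (v 0) (half (u 0) (u 1)) i)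
      + κ * (Dx h (half (u 0) (u 1)) i - h ^ 2 / 6 * Dx h (half (v 0) (v 1)) i)
      - ν * half (v 0) (v 1) i = 0) ∧
  (∀ k : ℕ, 1 ≤ k → k + 1 ≤ N → ∀ i : ℤ,
    (u (k + 1) i - u (k - 1) i) / (2 * τ) - μ * (v (k + 1) i - v (k - 1) i) / (2 * τ)
      + γ * (psi h (u k) (half (u (k - 1)) (u (k + 1))) i
             - h ^ 2 / 2 * psi h (v k) (half (u (k - 1)) (u (k + 1))) i)
      + κ * (Dx h (half (u (k - 1)) (u (k + 1))) i
             - h ^ 2 / 6 * Dx h (half (v (k - 1)) (v (k + 1))) i)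
      - ν * half (v (k - 1)) (v (k + 1)) i = 0)

section GridCalculus

variable {M : ℕ} {h : ℝ} {a b f : ℤ → ℝ}

namespace Periodic

lemma mul (ha : Periodic M a) (hb : Periodic M b) : Periodic M (fun i => a i * b i) :=
  fun i => by simp only [ha i, hb i]

lemma comp_sub_one (ha : Periodic M a) : Periodic M (fun i => a (i - 1)) :=
  fun i => by simp only; rw [add_sub_right_comm, ha]

lemma half (ha : Periodic M a) (hb : Periodic M b) : Periodic M (half a b) :=
  fun i => by simp only [BBMB.half, ha i, hb i]

lemma Dx (ha : Periodic M a) : Periodic M (Dx h a) :=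
  fun i => by simp only [BBMB.Dx]; rw [add_right_comm, ha, add_sub_right_comm, ha]

lemma dxx (ha : Periodic M a) : Periodic M (dxx h a) :=
  fun i => by simp only [BBMB.dxx]; rw [add_right_comm, ha, ha, add_sub_right_comm, ha]

lemma sum_Icc_comp_add_one (hf : Periodic M f) :
    ∑ i ∈ Icc (1 : ℤ) M, f (i + 1) = ∑ i ∈ Icc (1 : ℤ) M, f i := by
  have hM : (1 : ℤ) ≤ M + 1 := by omega
  have hshift : ∑ i ∈ Icc (1 : ℤ) M, f (i + 1) = ∑ i ∈ Icc (1 + 1 : ℤ) (M + 1), f i := by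
    rw [← map_add_right_Icc, sum_map]; rfl
  have hsplit :=
    (insert_Icc_add_one_left_eq_Icc hM).trans (insert_Icc_right_eq_Icc_add_one hM).symm
  have hwrap : f (M + 1) = f 1 := by rw [add_comm]; exact hf 1
  have := congrArg (∑ i ∈ ·, f i) hsplit
  rw [sum_insert (by simp), sum_insert (by simp), hwrap] at this
  linarith

end Periodic

lemma ip_comm (f g : ℤ → ℝ) : ip M h f g = ip M h g f := by
  simp only [ip, mul_comm (f _)]

lemma dip_comm (f g : ℤ → ℝ) : dip M h f g = dip M h g f := by
  simp only [dip, mul_comm (dxm h f _)]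

lemma ip_add_left (f g w : ℤ → ℝ) : ip M h (fun i => f i + g i) w = ip M h f w + ip M h g w := by
  simp only [ip, add_mul, sum_add_distrib, mul_add]

lemma ip_sub_left (f g w : ℤ → ℝ) : ip M h (fun i => f i - g i) w = ip M h f w - ip M h g w := by
  simp only [ip, sub_mul, sum_sub_distrib, mul_sub]

lemma ip_const_mul_left (c : ℝ) (f w : ℤ → ℝ) : ip M h (fun i => c * f i) w = c * ip M h f w := by
  simp only [ip, mul_assoc, ← mul_sum]; ring

lemma ip_div_const_left (c : ℝ) (f w : ℤ → ℝ) : ip M h (fun i => f i / c) w = ip M h f w / c := by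
  simp only [ip, div_mul_eq_mul_div, ← sum_div]; ring

lemma ip_zero_left (w : ℤ → ℝ) : ip M h (fun _ => 0) w = 0 := by
  simp [ip]

lemma ip_half_right (f a b : ℤ → ℝ) : ip M h f (half a b) = (ip M h f a + ip M h f b) / 2 := by
  unfold BBMB.half; rw [ip_comm, ip_div_const_left, ip_add_left, ip_comm a, ip_comm b]

lemma ip_comp_add_one (ha : Periodic M a) (hb : Periodic M b) :
    ip M h (fun i => a (i + 1)) (fun i => b (i + 1)) = ip M h a b :=
  congrArg (h * ·) (ha.mul hb).sum_Icc_comp_add_one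

lemma ip_comp_add_one_left (ha : Periodic M a) (hb : Periodic M b) :
    ip M h (fun i => a (i + 1)) b = ip M h a (fun i => b (i - 1)) := by
  simpa using ip_comp_add_one ha hb.comp_sub_one

lemma ip_Dx_left (ha : Periodic M a) (hb : Periodic M b) :
    ip M h (Dx h a) b = -ip M h a (Dx h b) := by
  have hexpand : ∀ f g : ℤ → ℝ, ip M h (Dx h f) g
      = (ip M h (fun i => f (i + 1)) g - ip M h (fun i => f (i - 1)) g) / (2 * h) := by
    intro f g; unfold BBMB.Dx; rw [ip_div_const_left, ip_sub_left]
  have hab := ip_comp_add_one_left (h := h) ha hb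
  have hba := ip_comp_add_one_left (h := h) hb ha
  rw [ip_comm a, hexpand, hexpand, hab, hba, ip_comm _ b, ip_comm b, ip_comm (fun i => b (i - 1))]
  ring

lemma ip_dxx_left (ha : Periodic M a) (hb : Periodic M b) :
    ip M h (dxx h a) b = -dip M h a b := by
  have hl : ip M h (dxx h a) b = (ip M h (fun i => a (i + 1)) b - 2 * ip M h a b
      + ip M h (fun i => a (i - 1)) b) / h ^ 2 := by
    unfold BBMB.dxx
    rw [ip_div_const_left, ip_add_left, ip_sub_left, ip_const_mul_left]
  have hr : dip M h a b = (ip M h a b - ip M h a (fun i => b (i - 1))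
      - ip M h (fun i => a (i - 1)) b
      + ip M h (fun i => a (i - 1)) (fun i => b (i - 1))) / h ^ 2 := by
    show ip M h (dxm h a) (dxm h b) = _
    unfold BBMB.dxm
    rw [ip_div_const_left, ip_sub_left, ip_comm a, ip_comm (fun i => a (i - 1)),
      ip_div_const_left, ip_sub_left, ip_div_const_left, ip_sub_left, ip_comm b, ip_comm b,
      ip_comm (fun i => b (i - 1)), ip_comm (fun i => b (i - 1))]
    ring
  have hdiag : ip M h (fun i => a (i - 1)) (fun i => b (i - 1)) = ip M h a b := by
    simpa only [add_sub_cancel_right] using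
      (ip_comp_add_one (h := h) ha.comp_sub_one hb.comp_sub_one).symm
  rw [hl, hr, hdiag, ip_comp_add_one_left ha hb]
  ring

lemma ip_dxx_comm (ha : Periodic M a) (hb : Periodic M b) :
    ip M h (dxx h a) b = ip M h a (dxx h b) := by
  rw [ip_dxx_left ha hb, ip_comm a, ip_dxx_left hb ha, dip_comm]

lemma dxx_Dx_comm (a : ℤ → ℝ) : dxx h (Dx h a) = Dx h (dxx h a) := by
  funext i
  simp only [dxx, Dx, add_sub_cancel_right, sub_add_cancel]
  ring

lemma ip_dxx_Dx (ha : Periodic M a) (hb : Periodic M b) :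
    ip M h (dxx h a) (Dx h b) = -ip M h (dxx h b) (Dx h a) := by
  rw [ip_dxx_comm ha hb.Dx, dxx_Dx_comm, ← neg_neg (ip M h a _), ← ip_Dx_left ha hb.dxx, ip_comm]

lemma ip_Dx_self (ha : Periodic M a) : ip M h (Dx h a) a = 0 := by
  have := ip_Dx_left (h := h) ha ha
  rw [ip_comm a] at this
  linarith

lemma ip_dxx_Dx_self (ha : Periodic M a) : ip M h (dxx h a) (Dx h a) = 0 := by
  have := ip_dxx_Dx (h := h) ha ha
  linarith

lemma ip_psi_self (ha : Periodic M a) (hb : Periodic M b) : ip M h (psi h a b) b = 0 := by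
  have hskew := ip_Dx_left (h := h) (ha.mul hb) hb
  have hprod : ip M h (fun i => a i * Dx h b i) b = ip M h (fun i => a i * b i) (Dx h b) := by
    simp only [ip, mul_right_comm (a _)]
  unfold psi
  rw [ip_const_mul_left, ip_add_left, hskew, hprod]
  ring

lemma nrm_sq (hh : 0 ≤ h) (u : ℤ → ℝ) : nrm M h u ^ 2 = ip M h u u :=
  Real.sq_sqrt (mul_nonneg hh (sum_nonneg fun _ _ => mul_self_nonneg _))

lemma snorm_sq (hh : 0 ≤ h) (u : ℤ → ℝ) : snorm M h u ^ 2 = dip M h u u :=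
  Real.sq_sqrt (mul_nonneg hh (sum_nonneg fun _ _ => mul_self_nonneg _))

end GridCalculus

/-- `v` is the fourth-order compact approximation of `u''` used by the scheme. -/
def IsCompactLaplacian (h : ℝ) (u v : ℤ → ℝ) : Prop :=
  ∀ i, v i = dxx h u i - h ^ 2 / 12 * dxx h v i

noncomputable def compactForm (M : ℕ) (h : ℝ) (u v u' v' : ℤ → ℝ) : ℝ :=
  dip M h u u' + h ^ 2 / 12 * ip M h v v' - h ^ 4 / 144 * dip M h v v'

lemma compactForm_comm (M : ℕ) (h : ℝ) (u v u' v' : ℤ → ℝ) :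
    compactForm M h u v u' v' = compactForm M h u' v' u v := by
  rw [compactForm, compactForm, dip_comm u, ip_comm v, dip_comm v]

namespace IsCompactLaplacian

variable {M : ℕ} {h : ℝ} {u v u' v' : ℤ → ℝ}

lemma half (hc : IsCompactLaplacian h u v) (hc' : IsCompactLaplacian h u' v') :
    IsCompactLaplacian h (BBMB.half u u') (BBMB.half v v') := fun i => by
  have e := hc i
  have e' := hc' i
  simp only [BBMB.half, dxx] at e e' ⊢
  linear_combination (e + e') / 2

lemma ip_left (hc : IsCompactLaplacian h u v) (w : ℤ → ℝ) :
    ip M h v w = ip M h (dxx h u) w - h ^ 2 / 12 * ip M h (dxx h v) w := by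
  rw [← ip_const_mul_left, ← ip_sub_left]
  exact congrArg (ip M h · w) (funext hc)

lemma ip_dxx_left_eq (hc : IsCompactLaplacian h u v) (w : ℤ → ℝ) :
    ip M h (dxx h u) w = ip M h v w + h ^ 2 / 12 * ip M h (dxx h v) w := by
  rw [hc.ip_left]
  ring

lemma ip_Dx_left_eq_zero (hc : IsCompactLaplacian h u v) (hu : Periodic M u) (hv : Periodic M v) :
    ip M h (Dx h v) u = 0 := by
  have hvDv : ip M h (dxx h v) (Dx h u) = 0 := by
    rw [ip_dxx_Dx hv hu, hc.ip_dxx_left_eq, ip_comm v, ip_Dx_self hv, ip_dxx_Dx_self hv]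
    ring
  rw [ip_Dx_left hv hu, hc.ip_left, ip_dxx_Dx_self hu, hvDv]
  ring

lemma ip_eq_neg_compactForm (hc : IsCompactLaplacian h u v) (hc' : IsCompactLaplacian h u' v')
    (hu : Periodic M u) (hv : Periodic M v) (hu' : Periodic M u') (hv' : Periodic M v') :
    ip M h v u' = -compactForm M h u v u' v' := by
  have hvu' : dip M h v u' = -ip M h v' v + h ^ 2 / 12 * dip M h v' v := by
    rw [dip_comm, ← neg_neg (dip M h u' v), ← ip_dxx_left hu' hv, hc'.ip_dxx_left_eq,
      ip_dxx_left hv' hv]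
    ring
  rw [hc.ip_left, ip_dxx_left hu hu', ip_dxx_left hv hu', hvu', compactForm, ip_comm v',
    dip_comm v']
  ring

end IsCompactLaplacian

theorem first_level_energy_general (M N : ℕ) (h τ μ γ κ ν : ℝ) (u v : ℕ → ℤ → ℝ)
    (hN : 0 < N) (hh : 0 < h) (hτ : 0 < τ)
    (hscheme : SatisfiesScheme M N h τ μ γ κ ν u v) :
    1 / 2 * ((nrm M h (u 1)) ^ 2 + (nrm M h (u 0)) ^ 2)
      + μ / 2 * (((snorm M h (u 1)) ^ 2 + (snorm M h (u 0)) ^ 2)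
          + h ^ 2 / 12 * ((nrm M h (v 1)) ^ 2 + (nrm M h (v 0)) ^ 2)
          - h ^ 4 / 144 * ((snorm M h (v 1)) ^ 2 + (snorm M h (v 0)) ^ 2))
      + ν * τ * ((snorm M h (half (u 0) (u 1))) ^ 2
          + h ^ 2 / 12 * (nrm M h (half (v 0) (v 1))) ^ 2
          - h ^ 4 / 144 * (snorm M h (half (v 0) (v 1))) ^ 2)
    = (nrm M h (u 0)) ^ 2 + μ * (snorm M h (u 0)) ^ 2
        + μ * h ^ 2 / 12 * (nrm M h (v 0)) ^ 2 - μ * h ^ 4 / 144 * (snorm M h (v 0)) ^ 2 := by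
  obtain ⟨hper, hrel, hfirst, -⟩ := hscheme
  obtain ⟨pu0, pv0⟩ := hper 0 N.zero_le
  obtain ⟨pu1, pv1⟩ := hper 1 hN
  have c0 : IsCompactLaplacian h (u 0) (v 0) := hrel 0 N.zero_le
  have c1 : IsCompactLaplacian h (u 1) (v 1) := hrel 1 hN
  have puh := pu0.half pu1
  have pvh := pv0.half pv1
  have ch := c0.half c1
  have key := congrArg (ip M h · (half (u 0) (u 1))) (funext hfirst)
  simp only [ip_add_left, ip_sub_left, ip_const_mul_left, ip_div_const_left, ip_zero_left,
    ip_psi_self pu0 puh, ip_psi_self pv0 puh, ip_Dx_self puh, ch.ip_Dx_left_eq_zero puh pvh,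
    ch.ip_eq_neg_compactForm ch puh pvh puh pvh] at key
  rw [ip_half_right, ip_half_right, ip_half_right, ip_half_right,
    c0.ip_eq_neg_compactForm c0 pu0 pv0 pu0 pv0, c0.ip_eq_neg_compactForm c1 pu0 pv0 pu1 pv1,
    c1.ip_eq_neg_compactForm c0 pu1 pv1 pu0 pv0, c1.ip_eq_neg_compactForm c1 pu1 pv1 pu1 pv1,
    compactForm_comm M h (u 1), ip_comm (u 1) (u 0)] at key
  simp only [nrm_sq hh.le, snorm_sq hh.le]
  unfold compactForm at key
  linear_combination (norm := (field_simp; ring)) τ * key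

/-- Theorem 4.1, first-level energy identity (21). -/
theorem first_level_energy (M N : ℕ) (h τ μ γ κ ν : ℝ) (u v : ℕ → ℤ → ℝ)
    (hM : 0 < M) (hN : 0 < N) (hh : 0 < h) (hτ : 0 < τ)
    (hscheme : SatisfiesScheme M N h τ μ γ κ ν u v) :
    1 / 2 * ((nrm M h (u 1)) ^ 2 + (nrm M h (u 0)) ^ 2)
      + μ / 2 * (((snorm M h (u 1)) ^ 2 + (snorm M h (u 0)) ^ 2)
          + h ^ 2 / 12 * ((nrm M h (v 1)) ^ 2 + (nrm M h (v 0)) ^ 2)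
          - h ^ 4 / 144 * ((snorm M h (v 1)) ^ 2 + (snorm M h (v 0)) ^ 2))
      + ν * τ * ((snorm M h (half (u 0) (u 1))) ^ 2
          + h ^ 2 / 12 * (nrm M h (half (v 0) (v 1))) ^ 2
          - h ^ 4 / 144 * (snorm M h (half (v 0) (v 1))) ^ 2)
    = (nrm M h (u 0)) ^ 2 + μ * (snorm M h (u 0)) ^ 2
        + μ * h ^ 2 / 12 * (nrm M h (v 0)) ^ 2 - μ * h ^ 4 / 144 * (snorm M h (v 0)) ^ 2 :=
  first_level_energy_general M N h τ μ γ κ ν u v hN hh hτ hscheme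

end BBMB
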